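/- Let X be a finite set of positive integers, let t ≥ 0 and r ≥ 1 be integers, and let Δ₀, Δ₁ ≥ 0 be real numbers with Δ₀ ≤ t/2. Suppose (X', X'') is a weighted (t,Δ₀)-halver of X, (X'_1,…,X'_r) is a weighted r-way (t,Δ₁)-splitter of X', and (X''_1,…,X''_r) is a weighted r-way (t,Δ₁)-splitter of X''. Then (X'_1,…,X'_r, X''_1,…,X''_r) is a weighted 2r-way (t, Δ₀/r + Δ₁)-splitter of X. -/

import Mathlib

/-!
Take `Ŝ` from the halver, so that each half `Ŝ ∩ X'`, `Ŝ ∩ X''` weighs at most `SUM Ŝ / 2 + Δ₀`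
(and at most `t`). Rebalance each half inside its own splitter into `T'` and `T''`, and use
`T' ∪ T''`. A part `X'_j` only meets `T'`, and
`SUM (T' ∩ X'_j) ≤ SUM T' / r + Δ₁ ≤ (SUM Ŝ / 2 + Δ₀) / r + Δ₁ = SUM Ŝ / (2r) + Δ₀ / r + Δ₁`.
-/

/-- `SUM S` is the sum of the elements of the finite set `S`. -/
def SUM (S : Finset ℕ) : ℕ := S.sum id

/-- `(X', X'')` is a weighted `(t, Δ)`-halver of `X`. -/
def IsWeightedHalver (X X' X'' : Finset ℕ) (t Δ : ℝ) : Prop :=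
  X' ∪ X'' = X ∧ Disjoint X' X'' ∧
  ∀ S ⊆ X, (SUM S : ℝ) ≤ t →
    ∃ Shat ⊆ X, SUM Shat = SUM S ∧
      ((SUM (Shat ∩ X') : ℝ) ≤ (SUM Shat : ℝ) / 2 + Δ) ∧
      ((SUM (Shat ∩ X'') : ℝ) ≤ (SUM Shat : ℝ) / 2 + Δ)

/-- `Xs` is a weighted `r`-way `(t, Δ)`-splitter of `X`. -/
def IsWeightedSplitter (X : Finset ℕ) (r : ℕ) (Xs : Fin r → Finset ℕ) (t Δ : ℝ) : Prop :=
  Finset.univ.biUnion Xs = X ∧ (∀ i j, i ≠ j → Disjoint (Xs i) (Xs j)) ∧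
  ∀ S ⊆ X, (SUM S : ℝ) ≤ t →
    ∃ Shat ⊆ X, SUM Shat = SUM S ∧
      ∀ j, (SUM (Shat ∩ Xs j) : ℝ) ≤ (SUM Shat : ℝ) / (r : ℝ) + Δ

open Finset

lemma SUM_union {A B : Finset ℕ} (h : Disjoint A B) : SUM (A ∪ B) = SUM A + SUM B :=
  sum_union h

lemma SUM_inter_add_SUM_inter {X X' X'' S : Finset ℕ} (hU : X' ∪ X'' = X)
    (hD : Disjoint X' X'') (hS : S ⊆ X) : SUM (S ∩ X') + SUM (S ∩ X'') = SUM S := by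
  rw [← SUM_union (hD.mono inter_subset_right inter_subset_right), ← inter_union_distrib_left,
    hU, inter_eq_left.2 hS]

section Append

variable {α : Type*}

lemma biUnion_append [DecidableEq α] {m n : ℕ} (A : Fin m → Finset α) (B : Fin n → Finset α) :
    univ.biUnion (Fin.append A B) = univ.biUnion A ∪ univ.biUnion B := by
  ext x
  simp only [mem_biUnion, mem_univ, true_and, mem_union]
  constructor
  · rintro ⟨k, hk⟩
    induction k using Fin.addCases with
    | left i => exact Or.inl ⟨i, by rwa [Fin.append_left] at hk⟩
    | right i => exact Or.inr ⟨i, by rwa [Fin.append_right] at hk⟩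
  · rintro (⟨i, hi⟩ | ⟨i, hi⟩)
    · exact ⟨Fin.castAdd n i, by rwa [Fin.append_left]⟩
    · exact ⟨Fin.natAdd m i, by rwa [Fin.append_right]⟩

lemma disjoint_append {m n : ℕ} {A : Fin m → Finset α} {B : Fin n → Finset α}
    (hA : ∀ i j, i ≠ j → Disjoint (A i) (A j)) (hB : ∀ i j, i ≠ j → Disjoint (B i) (B j))
    (hAB : ∀ i j, Disjoint (A i) (B j)) :
    ∀ i j, i ≠ j → Disjoint (Fin.append A B i) (Fin.append A B j) := by
  intro i j hij
  induction i using Fin.addCases <;> induction j using Fin.addCases <;>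
    simp only [Fin.append_left, Fin.append_right] at hij ⊢
  · exact hA _ _ (fun h => hij (congrArg _ h))
  · exact hAB _ _
  · exact (hAB _ _).symm
  · exact hB _ _ (fun h => hij (congrArg _ h))

lemma union_inter_eq_left_of_disjoint [DecidableEq α] {T T' Y : Finset α}
    (h : Disjoint T' Y) : (T ∪ T') ∩ Y = T ∩ Y := by
  rw [union_inter_distrib_right, disjoint_iff_inter_eq_empty.1 h, union_empty]

end Append

lemma IsWeightedSplitter.subset {X : Finset ℕ} {r : ℕ} {Xs : Fin r → Finset ℕ} {t Δ : ℝ}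
    (h : IsWeightedSplitter X r Xs t Δ) (i : Fin r) : Xs i ⊆ X :=
  h.1 ▸ subset_biUnion_of_mem Xs (mem_univ i)

lemma le_div_add_add_of_le_half {a b s Δ₀ Δ₁ : ℝ} {r : ℕ} (ha : a ≤ b / r + Δ₁)
    (hb : b ≤ s / 2 + Δ₀) : a ≤ s / ((r + r : ℕ) : ℝ) + (Δ₀ / r + Δ₁) := by
  have : b / r ≤ (s / 2 + Δ₀) / r := div_le_div_of_nonneg_right hb r.cast_nonneg
  rw [add_div, div_div, two_mul] at this
  push_cast
  linarith

theorem IsWeightedHalver.exists_balanced_append {X X' X'' : Finset ℕ} {t : ℕ} {r : ℕ}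
    {Δ₀ Δ₁ : ℝ} (hhal : IsWeightedHalver X X' X'' t Δ₀) {Xs' Xs'' : Fin r → Finset ℕ}
    (hs' : IsWeightedSplitter X' r Xs' t Δ₁) (hs'' : IsWeightedSplitter X'' r Xs'' t Δ₁) :
    ∀ S ⊆ X, (SUM S : ℝ) ≤ t → ∃ Shat ⊆ X, SUM Shat = SUM S ∧
      ∀ j, (SUM (Shat ∩ Fin.append Xs' Xs'' j) : ℝ) ≤
        (SUM Shat : ℝ) / ((r + r : ℕ) : ℝ) + (Δ₀ / r + Δ₁) := by
  obtain ⟨hU, hD, hH⟩ := hhal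
  intro S hS hSt
  obtain ⟨Sh, hShX, hShS, h', h''⟩ := hH S hS hSt
  have hsum := SUM_inter_add_SUM_inter hU hD hShX
  have hSht : (SUM Sh : ℝ) ≤ t := hShS ▸ hSt
  have hSh' : (SUM (Sh ∩ X') : ℝ) ≤ t := le_trans (by exact_mod_cast hsum ▸ le_self_add) hSht
  have hSh'' : (SUM (Sh ∩ X'') : ℝ) ≤ t := le_trans (by exact_mod_cast hsum ▸ le_add_self) hSht
  obtain ⟨T', hT'X, hT'eq, hT'⟩ := hs'.2.2 (Sh ∩ X') inter_subset_right hSh'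
  obtain ⟨T'', hT''X, hT''eq, hT''⟩ := hs''.2.2 (Sh ∩ X'') inter_subset_right hSh''
  have hT : SUM (T' ∪ T'') = SUM Sh := by
    rw [SUM_union (hD.mono hT'X hT''X), hT'eq, hT''eq, hsum]
  refine ⟨T' ∪ T'', hU ▸ union_subset_union hT'X hT''X, hT.trans hShS, ?_⟩
  rw [Fin.forall_fin_add]
  refine ⟨fun i => ?_, fun i => ?_⟩
  · rw [Fin.append_left, union_inter_eq_left_of_disjoint (hD.mono (hs'.subset i) hT''X).symm, hT]
    exact le_div_add_add_of_le_half (hT' i) (hT'eq ▸ h')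
  · rw [Fin.append_right, hT, union_comm,
      union_inter_eq_left_of_disjoint (hD.mono hT'X (hs''.subset i))]
    exact le_div_add_add_of_le_half (hT'' i) (hT''eq ▸ h'')

theorem stmt_15_general (X X' X'' : Finset ℕ)
    (t : ℕ) (r : ℕ) (Δ₀ Δ₁ : ℝ)
    (hhal : IsWeightedHalver X X' X'' (t : ℝ) Δ₀)
    (Xs' Xs'' : Fin r → Finset ℕ)
    (hs' : IsWeightedSplitter X' r Xs' (t : ℝ) Δ₁)
    (hs'' : IsWeightedSplitter X'' r Xs'' (t : ℝ) Δ₁) :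
    IsWeightedSplitter X (r + r) (Fin.append Xs' Xs'') (t : ℝ) (Δ₀ / (r : ℝ) + Δ₁) := by
  refine ⟨?_, ?_, hhal.exists_balanced_append hs' hs''⟩
  · rw [biUnion_append, hs'.1, hs''.1, hhal.1]
  · exact disjoint_append hs'.2.1 hs''.2.1
      (fun i j => hhal.2.1.mono (hs'.subset i) (hs''.subset j))

theorem stmt_15 (X X' X'' : Finset ℕ) (hpos : ∀ x ∈ X, 0 < x)
    (t : ℕ) (r : ℕ) (hr : 1 ≤ r) (Δ₀ Δ₁ : ℝ) (hΔ₀ : 0 ≤ Δ₀) (hΔ₁ : 0 ≤ Δ₁)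
    (hΔ₀t : Δ₀ ≤ (t : ℝ) / 2)
    (hhal : IsWeightedHalver X X' X'' (t : ℝ) Δ₀)
    (Xs' Xs'' : Fin r → Finset ℕ)
    (hs' : IsWeightedSplitter X' r Xs' (t : ℝ) Δ₁)
    (hs'' : IsWeightedSplitter X'' r Xs'' (t : ℝ) Δ₁) :
    IsWeightedSplitter X (r + r) (Fin.append Xs' Xs'') (t : ℝ) (Δ₀ / (r : ℝ) + Δ₁) :=
  stmt_15_general X X' X'' t r Δ₀ Δ₁ hhal Xs' Xs'' hs' hs''
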